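/- Let (W,R,V) be a model rooted at r satisfying condition (1): ∀x,y (x R y → ∃y' (x R y' ∧ d_r(y') = d_r(x)+1 ∧ y' ∼ y)), where ∼ is bisimilarity within (W,R,V). Let X be a finite set of propositional variables, k a natural number, and m ≥ 1. Define C(x,y) for x,y ∈ W_{≤k} := {w : d_r(w) ≤ k} by: d_r(x) = k, or (d_r(x) < k and d_r(y) ≤ d_r(x)+1 and ∃y' with x R y' and y' ∼_{k−d_r(x)−1}^X y). Suppose y_0 := x, y_1, …, y_m ∈ W_{≤k} satisfy C(y_i, y_{i+1}) for all i < m, that d_r(x) < k, and that m ≥ k − d_r(x). Then there exist y_1'',…,y_{k−d_r(x)}'' ∈ W with x R y_1'' R y_2'' R ⋯ R y_{k−d_r(x)}'', d_r(y_i'') = d_r(x) + i, and y_i'' ∼_{k−d_r(x)−i}^X y_i for each i ∈ {1,…,k−d_r(x)}. -/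
import Mathlib


/-- Modal formulas: ⊥, propositional variables, ¬, ∨, ◇. -/
inductive ModalFormula : Type
  | bot : ModalFormula
  | var : ℕ → ModalFormula
  | neg : ModalFormula → ModalFormula
  | or : ModalFormula → ModalFormula → ModalFormula
  | dia : ModalFormula → ModalFormula

namespace ModalFormula

/-- Modal depth: maximal nesting of ◇. -/
def md : ModalFormula → ℕ
  | bot => 0
  | var _ => 0
  | neg φ => md φ
  | or φ ψ => max (md φ) (md ψ)
  | dia φ => md φ + 1

/-- The set of propositional variables occurring in a formula. -/
def vars : ModalFormula → Set ℕ
  | bot => ∅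
  | var p => {p}
  | neg φ => vars φ
  | or φ ψ => vars φ ∪ vars ψ
  | dia φ => vars φ

/-- The set of subformulas of a formula (including the formula itself). -/
def subformulas : ModalFormula → Set ModalFormula
  | bot => {bot}
  | var p => {var p}
  | neg φ => insert (neg φ) (subformulas φ)
  | or φ ψ => insert (or φ ψ) (subformulas φ ∪ subformulas ψ)
  | dia φ => insert (dia φ) (subformulas φ)

end ModalFormula

/-- Standard Kripke satisfaction for a model given by a relation `R` and a valuation `V`. -/
def Sat {W : Type*} (R : W → W → Prop) (V : ℕ → Set W) : W → ModalFormula → Prop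
  | _, .bot => False
  | w, .var p => w ∈ V p
  | w, .neg φ => ¬ Sat R V w φ
  | w, .or φ ψ => Sat R V w φ ∨ Sat R V w ψ
  | w, .dia φ => ∃ v, R w v ∧ Sat R V v φ

/-- The `k`-step relation: `relPow R 0` is the identity, `relPow R (k+1) = relPow R k ∘ R`. -/
def relPow {W : Type*} (R : W → W → Prop) : ℕ → W → W → Prop
  | 0, x, y => x = y
  | k + 1, x, y => ∃ u, relPow R k x u ∧ R u y

/-- A frame is a `Φ`-frame if for every `(m,n) ∈ Φ`, `x R^m y` implies `x R^n y`. -/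
def PhiFrame {W : Type*} (R : W → W → Prop) (Φ : Set (ℕ × ℕ)) : Prop :=
  ∀ mn ∈ Φ, ∀ x y : W, relPow R mn.1 x y → relPow R mn.2 x y

/-- A pointed frame is rooted at `r` if every world is reachable from `r` in some number of steps. -/
def Rooted {W : Type*} (R : W → W → Prop) (r : W) : Prop :=
  ∀ w : W, ∃ k, relPow R k r w

/-- The depth of `w` w.r.t. `r`: the least `k` with `r R^k w`. -/
noncomputable def depth {W : Type*} (R : W → W → Prop) (r w : W) : ℕ :=
  sInf {k | relPow R k r w}

/-- `f` is a pointed p-morphism from `(W',R',r')` to `(W,R,r)`. -/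
def IsPMorphism {W' W : Type*} (R' : W' → W' → Prop) (r' : W')
    (R : W → W → Prop) (r : W) (f : W' → W) : Prop :=
  f r' = r ∧ (∀ x y, R' x y → R (f x) (f y)) ∧
    (∀ x y', R (f x) y' → ∃ y, R' x y ∧ f y = y')

/-- Bisimilarity of `x` (in model `(R,V)`) and `x'` (in model `(R',V')`). -/
def Bisim {W W' : Type*} (R : W → W → Prop) (V : ℕ → Set W)
    (R' : W' → W' → Prop) (V' : ℕ → Set W') (x : W) (x' : W') : Prop :=
  ∃ Z : W → W' → Prop, Z x x' ∧ ∀ w w', Z w w' →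
    (∀ p, w ∈ V p ↔ w' ∈ V' p) ∧
    (∀ v, R w v → ∃ v', R' w' v' ∧ Z v v') ∧
    (∀ v', R' w' v' → ∃ v, R w v ∧ Z v v')

/-- `k`-bisimilarity w.r.t. the set `X` of propositional variables. -/
def kBisim {W W' : Type*} (R : W → W → Prop) (V : ℕ → Set W)
    (R' : W' → W' → Prop) (V' : ℕ → Set W') (X : Set ℕ) :
    ℕ → W → W' → Prop
  | 0, w, w' => ∀ p ∈ X, (w ∈ V p ↔ w' ∈ V' p)
  | k + 1, w, w' => (∀ p ∈ X, (w ∈ V p ↔ w' ∈ V' p)) ∧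
      (∀ v, R w v → ∃ v', R' w' v' ∧ kBisim R V R' V' X k v v') ∧
      (∀ v', R' w' v' → ∃ v, R w v ∧ kBisim R V R' V' X k v v')

/-- `DepthPath R dep n x z` says there is an `n`-step `R`-path
`x R w₁ R ⋯ R w_{n-1} R z` whose intermediate points satisfy `dep (w_j) = dep x + j`. -/
def DepthPath {W : Type*} (R : W → W → Prop) (dep : W → ℕ) (n : ℕ) (x z : W) : Prop :=
  ∃ w : ℕ → W, w 0 = x ∧ w n = z ∧ (∀ j < n, R (w j) (w (j + 1))) ∧
    ∀ j, 0 < j → j < n → dep (w j) = dep x + j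

/-- The domain of the filtration: worlds of depth at most `k`. -/
def DepthLE (W : Type*) (R : W → W → Prop) (r : W) (k : ℕ) := {w : W // depth R r w ≤ k}

/-- The filtration equivalence `x ≡ y iff d(x) = d(y) andepth R r x ∼_{k-d(x)} y`. -/
def FilEquiv {W : Type*} (R : W → W → Prop) (V : ℕ → Set W) (r : W) (X : Set ℕ) (k : ℕ)
    (x y : DepthLE W R r k) : Prop :=
  depth R r x.1 = depth R r y.1 ∧ kBisim R V R V X (k - depth R r x.1) x.1 y.1

/-- The condition `C(x,y)`: `d(x) = k`, or `d(x) < k`, `d(y) ≤ d(x)+1`, and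
there is `y'` with `x R y'` and `y' ∼_{k-d(x)-1} y`. -/
def FilC {W : Type*} (R : W → W → Prop) (V : ℕ → Set W) (r : W) (X : Set ℕ) (k : ℕ)
    (x y : W) : Prop :=
  depth R r x = k ∨ (depth R r x < k ∧ depth R r y ≤ depth R r x + 1 ∧
    ∃ y', R x y' ∧ kBisim R V R V X (k - depth R r x - 1) y' y)

/-- The filtrated relation `R^f` on equivalence classes: `|x| R^f |y|` iff `C(x,y)`. -/
def FilRel {W : Type*} (R : W → W → Prop) (V : ℕ → Set W) (r : W) (X : Set ℕ) (k : ℕ)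
    (a c : Quot (FilEquiv R V r X k)) : Prop :=
  ∃ x z : DepthLE W R r k, a = Quot.mk _ x ∧ c = Quot.mk _ z ∧ FilC R V r X k x.1 z.1

/-- The filtrated valuation `V^f(p) = {|x| : x ∈ V(p)}`. -/
def FilVal {W : Type*} (R : W → W → Prop) (V : ℕ → Set W) (r : W) (X : Set ℕ) (k : ℕ)
    (p : ℕ) : Set (Quot (FilEquiv R V r X k)) :=
  {a | ∃ x : DepthLE W R r k, a = Quot.mk _ x ∧ x.1 ∈ V p}

lemma kBisim_refl {W : Type*} (R : W → W → Prop) (V : ℕ → Set W) (X : Set ℕ) :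
    ∀ n (w : W), kBisim R V R V X n w w
  | 0, _ => fun _ _ => Iff.rfl
  | n + 1, w => ⟨fun _ _ => Iff.rfl,
      fun v hv => ⟨v, hv, kBisim_refl R V X n v⟩,
      fun v hv => ⟨v, hv, kBisim_refl R V X n v⟩⟩

lemma kBisim_mono {W W' : Type*} {R : W → W → Prop} {V : ℕ → Set W}
    {R' : W' → W' → Prop} {V' : ℕ → Set W'} {X : Set ℕ} :
    ∀ {m n : ℕ}, m ≤ n → ∀ {w w'}, kBisim R V R' V' X n w w' → kBisim R V R' V' X m w w' := by
  intro m
  induction m with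
  | zero =>
    intro n _ w w' h
    cases n with
    | zero => exact h
    | succ n => exact h.1
  | succ m ih =>
    intro n hmn w w' h
    cases n with
    | zero => omega
    | succ n =>
      exact ⟨h.1,
        fun v hv => by obtain ⟨v', hv', hb⟩ := h.2.1 v hv;
                       exact ⟨v', hv', ih (Nat.le_of_succ_le_succ hmn) hb⟩,
        fun v' hv' => by obtain ⟨v, hv, hb⟩ := h.2.2 v' hv';
                         exact ⟨v, hv, ih (Nat.le_of_succ_le_succ hmn) hb⟩⟩

lemma kBisim_trans {W₁ W₂ W₃ : Type*} {R₁ : W₁ → W₁ → Prop} {V₁ : ℕ → Set W₁}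
    {R₂ : W₂ → W₂ → Prop} {V₂ : ℕ → Set W₂} {R₃ : W₃ → W₃ → Prop} {V₃ : ℕ → Set W₃}
    {X : Set ℕ} :
    ∀ {n : ℕ} {a b c}, kBisim R₁ V₁ R₂ V₂ X n a b → kBisim R₂ V₂ R₃ V₃ X n b c →
      kBisim R₁ V₁ R₃ V₃ X n a c := by
  intro n
  induction n with
  | zero => intro a b c h1 h2 p hp; exact (h1 p hp).trans (h2 p hp)
  | succ n ih =>
    intro a b c h1 h2
    refine ⟨fun p hp => ((h1.1 p hp).trans (h2.1 p hp)), ?_, ?_⟩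
    · intro v hv
      obtain ⟨v', hv', hb⟩ := h1.2.1 v hv
      obtain ⟨v'', hv'', hb'⟩ := h2.2.1 v' hv'
      exact ⟨v'', hv'', ih hb hb'⟩
    · intro v'' hv''
      obtain ⟨v', hv', hb'⟩ := h2.2.2 v'' hv''
      obtain ⟨v, hv, hb⟩ := h1.2.2 v' hv'
      exact ⟨v, hv, ih hb hb'⟩

lemma bisim_kBisim {W W' : Type*} {R : W → W → Prop} {V : ℕ → Set W}
    {R' : W' → W' → Prop} {V' : ℕ → Set W'} {x : W} {x' : W'}
    (h : Bisim R V R' V' x x') (X : Set ℕ) (n : ℕ) : kBisim R V R' V' X n x x' := by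
  obtain ⟨Z, hZ, hprop⟩ := h
  suffices H : ∀ n w w', Z w w' → kBisim R V R' V' X n w w' from H n x x' hZ
  intro n
  induction n with
  | zero => intro w w' hw p _; exact (hprop w w' hw).1 p
  | succ n ih =>
    intro w w' hw
    refine ⟨fun p _ => (hprop w w' hw).1 p, ?_, ?_⟩
    · intro v hv
      obtain ⟨v', hv', hZ'⟩ := (hprop w w' hw).2.1 v hv
      exact ⟨v', hv', ih v v' hZ'⟩
    · intro v' hv'
      obtain ⟨v, hv, hZ'⟩ := (hprop w w' hw).2.2 v' hv'
      exact ⟨v, hv, ih v v' hZ'⟩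

lemma exists_chain {W : Type*} (Rl : W → W → Prop) (P : ℕ → W → Prop) (n : ℕ) (x : W)
    (h0 : P 0 x) (hstep : ∀ i < n, ∀ w, P i w → ∃ w', Rl w w' ∧ P (i + 1) w') :
    ∃ g : ℕ → W, g 0 = x ∧ (∀ i < n, Rl (g i) (g (i + 1))) ∧ ∀ i ≤ n, P i (g i) := by
  induction n with
  | zero =>
    refine ⟨fun _ => x, rfl, fun i hi => absurd hi (by omega), fun i hi => ?_⟩
    interval_cases i; exact h0
  | succ n ih =>
    obtain ⟨g, hg0, hgR, hgP⟩ := ih (fun i hi w hw => hstep i (by omega) w hw)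
    obtain ⟨w', hR, hP⟩ := hstep n (by omega) (g n) (hgP n le_rfl)
    refine ⟨fun j => if j ≤ n then g j else w', by simp [hg0], ?_, ?_⟩
    · intro i hi
      by_cases h : i < n
      · simpa [Nat.le_of_lt h, Nat.succ_le_of_lt h] using hgR i h
      · have : i = n := by omega
        subst this
        simpa using hR
    · intro i hi
      by_cases h : i ≤ n
      · simpa [h] using hgP i h
      · have : i = n + 1 := by omega
        subst this
        simpa using hP

/-- Case 2 path lifting: under condition (1), a `C`-chain `x = y₀, y₁, …, y_m` in
`W_{≤k}` with `d(x) < k ≤ d(x) + m` lifts to an `R`-path `x R y₁'' R ⋯ R y_{k-d(x)}''`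
with `d(yᵢ'') = d(x)+i` and `yᵢ'' ∼_{k-d(x)-i} yᵢ`. -/
theorem statement17 {W : Type*} (R : W → W → Prop) (V : ℕ → Set W) (r : W)
    (hRoot : Rooted R r)
    (h1 : ∀ x y, R x y → ∃ y', R x y' ∧ depth R r y' = depth R r x + 1 ∧ Bisim R V R V y' y)
    (X : Set ℕ) (hX : X.Finite) (k m : ℕ) (hm : 1 ≤ m)
    (x : W) (y : ℕ → W) (hy0 : y 0 = x)
    (hmem : ∀ i ≤ m, depth R r (y i) ≤ k)
    (hC : ∀ i < m, FilC R V r X k (y i) (y (i + 1)))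
    (hdx : depth R r x < k) (hkm : k - depth R r x ≤ m) :
    ∃ y'' : ℕ → W, y'' 0 = x ∧ (∀ i < k - depth R r x, R (y'' i) (y'' (i + 1))) ∧
      ∀ i, 1 ≤ i → i ≤ k - depth R r x →
        depth R r (y'' i) = depth R r x + i ∧
        kBisim R V R V X (k - depth R r x - i) (y'' i) (y i) := by
  set n : ℕ := k - depth R r x with hn
  -- depths along the C-chain grow at most by one
  have hdy : ∀ i < n, depth R r (y i) ≤ depth R r x + i := by
    intro i
    induction i with
    | zero => intro _; simp [hy0]
    | succ i ih =>
      intro hi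
      have hdi : depth R r (y i) ≤ depth R r x + i := ih (by omega)
      have hlt : depth R r (y i) < k := by omega
      rcases hC i (by omega) with h | ⟨_, hle, _⟩
      · omega
      · omega
  -- the step lemma
  have hstep : ∀ i < n, ∀ w, (depth R r w = depth R r x + i ∧ kBisim R V R V X (n - i) w (y i)) →
      ∃ w', R w w' ∧ depth R r w' = depth R r x + (i + 1) ∧ kBisim R V R V X (n - (i + 1)) w' (y (i + 1)) := by
    intro i hi w ⟨hdw, hkb⟩
    have hdi : depth R r (y i) ≤ depth R r x + i := hdy i hi
    have hlt : depth R r (y i) < k := by omega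
    rcases hC i (by omega) with h | ⟨_, _, y', hRy', hky'⟩
    · omega
    obtain ⟨t, ht⟩ : ∃ t, n - i = t + 1 := ⟨n - i - 1, by omega⟩
    rw [ht] at hkb
    obtain ⟨v, hRv, hkv⟩ := hkb.2.2 y' hRy'
    obtain ⟨w', hRw', hdw', hbis⟩ := h1 w v hRv
    have h1' : kBisim R V R V X t w' v := bisim_kBisim hbis X t
    have h2' : kBisim R V R V X t y' (y (i + 1)) :=
      kBisim_mono (by omega : t ≤ k - depth R r (y i) - 1) hky'
    have : kBisim R V R V X t w' (y (i + 1)) :=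
      kBisim_trans h1' (kBisim_trans hkv h2')
    refine ⟨w', hRw', by omega, ?_⟩
    have htn : n - (i + 1) = t := by omega
    rwa [htn]
  have h0 : depth R r x = depth R r x + 0 ∧ kBisim R V R V X (n - 0) x (y 0) := by
    constructor
    · omega
    · rw [hy0]; exact kBisim_refl R V X _ x
  obtain ⟨g, hg0, hgR, hgP⟩ := exists_chain R
    (fun i w => depth R r w = depth R r x + i ∧ kBisim R V R V X (n - i) w (y i)) n x h0 hstep
  exact ⟨g, hg0, hgR, fun i _ hi => hgP i hi⟩
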